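/- arXiv:2601.04295 — 4 statements merged into one kernel-verified Lean document; each statement's English description precedes it below -/
import Mathlib

section
/- There exists a family B of 30 six-element subsets of {1,...,60} such that for every 6-element subset S of {1,...,60}, there is a block B₀ ∈ B with |S ∩ B₀| ≥ 2. -/
/-- Base block `G i = {6(i-1)+1, ..., 6i}`. -/
def G (i : ℕ) : Finset ℕ := Finset.Icc (6*(i-1)+1) (6*i)

/-- Half-triples: `Gh i 1` is the first triple of `G i`, `Gh i 2` the last. -/
def Gh (i u : ℕ) : Finset ℕ :=
  if u = 1 then Finset.Icc (6*(i-1)+1) (6*(i-1)+3)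
  else Finset.Icc (6*(i-1)+4) (6*i)

/-- Recombined block `G_{2m-1}^{(u)} ∪ G_{2m}^{(v)}`. -/
def R (m u v : ℕ) : Finset ℕ := Gh (2*m-1) u ∪ Gh (2*m) v

/-- The explicit family of 30 blocks. -/
def fam : Finset (Finset ℕ) :=
  (Finset.Icc 1 10).image G ∪
    ((Finset.Icc 1 5) ×ˢ (Finset.Icc 1 2) ×ˢ (Finset.Icc 1 2)).image
      (fun p => R p.1 p.2.1 p.2.2)

/-- group index of `x` -/
def gIdx (x : ℕ) : ℕ := (x-1)/6 + 1

/-- half index of `x` -/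
def hIdx (x : ℕ) : ℕ := if (x-1) % 6 < 3 then 1 else 2

/-- pair index of `x` -/
def qIdx (x : ℕ) : ℕ := (x-1)/12 + 1

lemma mem_G_gIdx {x : ℕ} (hx : x ∈ Finset.Icc 1 60) : x ∈ G (gIdx x) := by
  simp only [Finset.mem_Icc, G, gIdx] at *
  omega

lemma gIdx_mem {x : ℕ} (hx : x ∈ Finset.Icc 1 60) : gIdx x ∈ Finset.Icc 1 10 := by
  simp only [Finset.mem_Icc, gIdx] at *
  omega

lemma mem_Gh_gIdx {x : ℕ} (hx : x ∈ Finset.Icc 1 60) : x ∈ Gh (gIdx x) (hIdx x) := by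
  simp only [Finset.mem_Icc] at hx
  by_cases h3 : (x-1) % 6 < 3
  · have h : hIdx x = 1 := if_pos h3
    rw [h]
    simp [Gh, gIdx, Finset.mem_Icc]
    omega
  · have h : hIdx x = 2 := if_neg h3
    rw [h]
    simp [Gh, gIdx, Finset.mem_Icc]
    omega

lemma hIdx_mem (x : ℕ) : hIdx x ∈ Finset.Icc 1 2 := by
  simp only [Finset.mem_Icc, hIdx]; split <;> omega

lemma qIdx_mem {x : ℕ} (hx : x ∈ Finset.Icc 1 60) : qIdx x ∈ Finset.Icc 1 5 := by
  simp only [Finset.mem_Icc, qIdx] at *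
  omega

lemma gIdx_eq_of_qIdx {x y : ℕ} (hq : qIdx x = qIdx y) (hg : gIdx x < gIdx y) :
    gIdx x = 2 * qIdx x - 1 ∧ gIdx y = 2 * qIdx x := by
  simp only [gIdx, qIdx] at *
  omega

lemma R_mem_fam {m u v : ℕ} (hm : m ∈ Finset.Icc 1 5) (hu : u ∈ Finset.Icc 1 2)
    (hv : v ∈ Finset.Icc 1 2) : R m u v ∈ fam := by
  refine Finset.mem_union_right _ (Finset.mem_image.mpr ⟨(m, u, v), ?_, rfl⟩)
  simp [Finset.mem_product, hm, hu, hv]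

theorem stmt0 :
    ∃ B : Finset (Finset ℕ), B.card = 30 ∧
      (∀ b ∈ B, b ⊆ Finset.Icc 1 60 ∧ b.card = 6) ∧
      ∀ S ⊆ Finset.Icc 1 60, S.card = 6 → ∃ b ∈ B, 2 ≤ (S ∩ b).card := by
  refine ⟨fam, by decide, by decide, ?_⟩
  intro S hS hcard
  by_cases h : ∃ i ∈ Finset.Icc 1 10, 2 ≤ (S ∩ G i).card
  · obtain ⟨i, hi, h2⟩ := h
    exact ⟨G i, Finset.mem_union_left _ (Finset.mem_image_of_mem G hi), h2⟩
  · push_neg at h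
    -- pigeonhole on pair index
    have hmaps : ∀ x ∈ S, qIdx x ∈ Finset.Icc 1 5 := fun x hx => qIdx_mem (hS hx)
    have hlt : (Finset.Icc 1 5).card < S.card := by simp [hcard]
    obtain ⟨x, hx, y, hy, hxy, hqeq⟩ :=
      Finset.exists_ne_map_eq_of_card_lt_of_maps_to hlt hmaps
    have hgne : gIdx x ≠ gIdx y := by
      intro heq
      have h1 : 1 < (S ∩ G (gIdx x)).card := by
        refine Finset.one_lt_card.mpr ⟨x, ?_, y, ?_, hxy⟩
        · exact Finset.mem_inter.mpr ⟨hx, mem_G_gIdx (hS hx)⟩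
        · exact Finset.mem_inter.mpr ⟨hy, heq ▸ mem_G_gIdx (hS hy)⟩
      exact absurd (h _ (gIdx_mem (hS hx))) (by omega)
    -- WLOG gIdx x < gIdx y
    rcases lt_or_gt_of_ne hgne with hlt' | hlt'
    · obtain ⟨e1, e2⟩ := gIdx_eq_of_qIdx hqeq hlt'
      refine ⟨R (qIdx x) (hIdx x) (hIdx y),
        R_mem_fam (qIdx_mem (hS hx)) (hIdx_mem x) (hIdx_mem y), ?_⟩
      have h1 : 1 < (S ∩ R (qIdx x) (hIdx x) (hIdx y)).card := by
        refine Finset.one_lt_card.mpr ⟨x, ?_, y, ?_, hxy⟩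
        · refine Finset.mem_inter.mpr ⟨hx, Finset.mem_union_left _ ?_⟩
          rw [← e1]; exact mem_Gh_gIdx (hS hx)
        · refine Finset.mem_inter.mpr ⟨hy, Finset.mem_union_right _ ?_⟩
          rw [← e2]; exact mem_Gh_gIdx (hS hy)
      omega
    · obtain ⟨e1, e2⟩ := gIdx_eq_of_qIdx hqeq.symm hlt'
      refine ⟨R (qIdx y) (hIdx y) (hIdx x),
        R_mem_fam (qIdx_mem (hS hy)) (hIdx_mem y) (hIdx_mem x), ?_⟩
      have h1 : 1 < (S ∩ R (qIdx y) (hIdx y) (hIdx x)).card := by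
        refine Finset.one_lt_card.mpr ⟨y, ?_, x, ?_, hxy.symm⟩
        · refine Finset.mem_inter.mpr ⟨hy, Finset.mem_union_left _ ?_⟩
          rw [← e1]; exact mem_Gh_gIdx (hS hy)
        · refine Finset.mem_inter.mpr ⟨hx, Finset.mem_union_right _ ?_⟩
          rw [← e2]; exact mem_Gh_gIdx (hS hx)
      omega
end

section
/- For every 6-element subset S of {1,...,60}, there exist two distinct elements x, y ∈ S and a block B in the explicit family B of 30 blocks such that {x, y} ⊆ B. -/
set_option maxRecDepth 10000 in
lemma key : ∀ x ∈ Finset.Icc 1 60, ∀ y ∈ Finset.Icc 1 60,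
    (x-1)/12 = (y-1)/12 → ∃ b ∈ fam, x ∈ b ∧ y ∈ b := by decide

theorem stmt3 (S : Finset ℕ) (hS : S ⊆ Finset.Icc 1 60) (hcard : S.card = 6) :
    ∃ x ∈ S, ∃ y ∈ S, x ≠ y ∧ ∃ b ∈ fam, x ∈ b ∧ y ∈ b := by
  have hmaps : ∀ x ∈ S, (x - 1) / 12 ∈ Finset.range 5 := by
    intro x hx
    have hx' := hS hx
    simp only [Finset.mem_Icc] at hx'
    simp only [Finset.mem_range]
    omega
  have hlt : (Finset.range 5).card < S.card := by simp [hcard]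
  obtain ⟨x, hx, y, hy, hne, heq⟩ :=
    Finset.exists_ne_map_eq_of_card_lt_of_maps_to hlt hmaps
  exact ⟨x, hx, y, hy, hne, key x (hS hx) y (hS hy) heq⟩
end

section
/- Let P be any partition of {1,...,60} into ten 6-element blocks H_1,...,H_10, grouped into five pairs, with each H_i split into two 3-element halves H_i^{(1)}, H_i^{(2)}. Then the family consisting of the ten H_i together with the twenty sets H_{2m-1}^{(u)} ∪ H_{2m}^{(v)} (m ∈ {1,...,5}, u,v ∈ {1,2}) has the property that every 6-element subset S of {1,...,60} intersects some member of the family in at least two elements. -/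
theorem stmt7 (H : ℕ → Finset ℕ) (Hh : ℕ → ℕ → Finset ℕ)
    (hcard : ∀ i ∈ Finset.Icc 1 10, (H i).card = 6)
    (hdisj : ∀ i ∈ Finset.Icc 1 10, ∀ j ∈ Finset.Icc 1 10, i ≠ j → Disjoint (H i) (H j))
    (hcover : (Finset.Icc 1 10).biUnion H = Finset.Icc 1 60)
    (hhalf : ∀ i ∈ Finset.Icc 1 10,
      (Hh i 1).card = 3 ∧ (Hh i 2).card = 3 ∧
      Disjoint (Hh i 1) (Hh i 2) ∧ Hh i 1 ∪ Hh i 2 = H i) :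
    ∀ S ⊆ Finset.Icc 1 60, S.card = 6 →
      ∃ b : Finset ℕ,
        ((∃ i ∈ Finset.Icc 1 10, b = H i) ∨
          ∃ m ∈ Finset.Icc 1 5, ∃ u ∈ Finset.Icc 1 2, ∃ v ∈ Finset.Icc 1 2,
            b = Hh (2*m-1) u ∪ Hh (2*m) v) ∧
        2 ≤ (S ∩ b).card := by
  intro S hS hcard6
  -- every element of S lies in some pair H(2m-1) ∪ H(2m), m ∈ [1,5]
  have hSsub : ∀ x ∈ S, ∃ m ∈ Finset.Icc 1 5, x ∈ H (2*m-1) ∪ H (2*m) := by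
    intro x hx
    have hx60 := hS hx
    rw [← hcover] at hx60
    obtain ⟨i, hi, hxi⟩ := Finset.mem_biUnion.1 hx60
    simp only [Finset.mem_Icc] at hi
    refine ⟨(i+1)/2, by simp only [Finset.mem_Icc]; omega, ?_⟩
    rcases Nat.even_or_odd i with ⟨r, hr⟩ | ⟨r, hr⟩
    · have h2 : 2*((i+1)/2) = i := by omega
      rw [h2]; exact Finset.mem_union_right _ hxi
    · have h2 : 2*((i+1)/2) - 1 = i := by omega
      rw [h2]; exact Finset.mem_union_left _ hxi
  -- pigeonhole: some pair meets S in at least 2 elements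
  have key : ∃ m ∈ Finset.Icc 1 5, 2 ≤ (S ∩ (H (2*m-1) ∪ H (2*m))).card := by
    by_contra hcon
    push_neg at hcon
    have h1 : ∀ m ∈ Finset.Icc 1 5, (S ∩ (H (2*m-1) ∪ H (2*m))).card ≤ 1 := by
      intro m hm; have := hcon m hm; omega
    have hle : S.card ≤ ∑ m ∈ Finset.Icc 1 5, (S ∩ (H (2*m-1) ∪ H (2*m))).card := by
      calc S.card ≤ ((Finset.Icc 1 5).biUnion
            (fun m => S ∩ (H (2*m-1) ∪ H (2*m)))).card := by
            apply Finset.card_le_card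
            intro x hx
            obtain ⟨m, hm, hxm⟩ := hSsub x hx
            exact Finset.mem_biUnion.2 ⟨m, hm, Finset.mem_inter.2 ⟨hx, hxm⟩⟩
        _ ≤ _ := Finset.card_biUnion_le
    have hsum : ∑ m ∈ Finset.Icc 1 5, (S ∩ (H (2*m-1) ∪ H (2*m))).card ≤
        ∑ m ∈ Finset.Icc 1 5, 1 := Finset.sum_le_sum h1
    simp only [Finset.sum_const, smul_eq_mul, mul_one, Nat.card_Icc] at hsum
    omega
  obtain ⟨m, hm, h2⟩ := key
  obtain ⟨x, hx, y, hy, hxy⟩ := Finset.one_lt_card.1 (by omega : 1 < (S ∩ (H (2*m-1) ∪ H (2*m))).card)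
  simp only [Finset.mem_Icc] at hm
  have hodd : 2*m-1 ∈ Finset.Icc 1 10 := by simp only [Finset.mem_Icc]; omega
  have heven : 2*m ∈ Finset.Icc 1 10 := by simp only [Finset.mem_Icc]; omega
  obtain ⟨hxS, hxU⟩ := Finset.mem_inter.1 hx
  obtain ⟨hyS, hyU⟩ := Finset.mem_inter.1 hy
  have twoLe : ∀ (b : Finset ℕ), x ∈ b → y ∈ b → 2 ≤ (S ∩ b).card := by
    intro b hxb hyb
    exact Finset.one_lt_card.2 ⟨x, Finset.mem_inter.2 ⟨hxS, hxb⟩,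
      y, Finset.mem_inter.2 ⟨hyS, hyb⟩, hxy⟩
  -- helper: membership in a half
  have half : ∀ i ∈ Finset.Icc 1 10, ∀ z ∈ H i, ∃ u ∈ Finset.Icc 1 2, z ∈ Hh i u := by
    intro i hi z hz
    obtain ⟨-, -, -, hun⟩ := hhalf i hi
    rw [← hun] at hz
    rcases Finset.mem_union.1 hz with h | h
    · exact ⟨1, by simp, h⟩
    · exact ⟨2, by simp, h⟩
  rcases Finset.mem_union.1 hxU with hx1 | hx2 <;> rcases Finset.mem_union.1 hyU with hy1 | hy2
  · exact ⟨H (2*m-1), Or.inl ⟨2*m-1, hodd, rfl⟩, twoLe _ hx1 hy1⟩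
  · obtain ⟨u, hu, hxu⟩ := half _ hodd x hx1
    obtain ⟨v, hv, hyv⟩ := half _ heven y hy2
    exact ⟨Hh (2*m-1) u ∪ Hh (2*m) v,
      Or.inr ⟨m, by simp only [Finset.mem_Icc]; omega, u, hu, v, hv, rfl⟩,
      twoLe _ (Finset.mem_union_left _ hxu) (Finset.mem_union_right _ hyv)⟩
  · obtain ⟨u, hu, hyu⟩ := half _ hodd y hy1
    obtain ⟨v, hv, hxv⟩ := half _ heven x hx2
    exact ⟨Hh (2*m-1) u ∪ Hh (2*m) v,
      Or.inr ⟨m, by simp only [Finset.mem_Icc]; omega, u, hu, v, hv, rfl⟩,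
      twoLe _ (Finset.mem_union_right _ hxv) (Finset.mem_union_left _ hyu)⟩
  · exact ⟨H (2*m), Or.inl ⟨2*m, heven, rfl⟩, twoLe _ hx2 hy2⟩
end

section
/- There is no need for more than 30 blocks: the explicit family B of 30 blocks satisfies that every pair {x,y} with x ∈ G_{2m-1} and y ∈ G_{2m} for some m, or with x,y in the same base block G_i, is contained in some block of B. -/
theorem stmt10 (x y : ℕ) (hx : x ∈ Finset.Icc 1 60) (hy : y ∈ Finset.Icc 1 60)
    (hxy : x ≠ y)
    (h : (∃ i ∈ Finset.Icc 1 10, x ∈ G i ∧ y ∈ G i) ∨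
      (∃ m ∈ Finset.Icc 1 5, x ∈ G (2*m-1) ∧ y ∈ G (2*m))) :
    ∃ b ∈ fam, x ∈ b ∧ y ∈ b := by
  rcases h with ⟨i, hi, hxi, hyi⟩ | ⟨m, hm, hxm, hym⟩
  · exact ⟨G i, Finset.mem_union_left _ (Finset.mem_image_of_mem G hi), hxi, hyi⟩
  · simp only [Finset.mem_Icc] at hm
    simp only [G, Finset.mem_Icc] at hxm hym
    set u : ℕ := if x ≤ 6*(2*m-1-1)+3 then 1 else 2 with hu
    set v : ℕ := if y ≤ 6*(2*m-1)+3 then 1 else 2 with hv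
    refine ⟨R m u v, ?_, ?_, ?_⟩
    · apply Finset.mem_union_right
      apply Finset.mem_image.mpr
      refine ⟨(m, u, v), ?_, rfl⟩
      simp only [Finset.mem_product, Finset.mem_Icc]
      refine ⟨⟨hm.1, hm.2⟩, ?_, ?_⟩ <;> constructor <;>
        simp only [hu, hv] <;> split <;> omega
    · apply Finset.mem_union_left
      simp only [Gh, hu]
      split <;> simp_all [Finset.mem_Icc] <;> omega
    · apply Finset.mem_union_right
      simp only [Gh, hv]
      split <;> simp_all [Finset.mem_Icc] <;> omega
end
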